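/- If a family (w_m)_{m ∈ ℤ} of complex numbers and γ ∈ ℤ satisfy 2(m−n)·w_{m+n} = (−n−γ)·w_n for all m, n ∈ ℤ, then w_m = 0 for all m ∈ ℤ. -/

import Mathlib

/- Taking `m = n` forces `f n = 0`; the pair `(2m - 1, 1 - m)` then sums to `m` and has
difference `3m - 2`, which never vanishes in `ℤ`. -/
theorem eq_zero_of_two_mul_sub_mul_eq {R : Type*} [Ring R] [NoZeroDivisors R] [CharZero R]
    (w f : ℤ → R) (h : ∀ m n : ℤ, 2 * ((m - n : ℤ) : R) * w (m + n) = f n) (m : ℤ) :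
    w m = 0 := by
  have hf : f (1 - m) = 0 := by simpa using (h (1 - m) (1 - m)).symm
  have hmul : 2 * ((3 * m - 2 : ℤ) : R) * w m = 0 := by
    have := h (2 * m - 1) (1 - m)
    rwa [show 2 * m - 1 - (1 - m) = 3 * m - 2 by ring, show 2 * m - 1 + (1 - m) = m by ring,
      hf] at this
  have hcoeff : (2 : R) * ((3 * m - 2 : ℤ) : R) ≠ 0 :=
    mul_ne_zero two_ne_zero (Int.cast_ne_zero.mpr (by omega))
  exact (mul_eq_zero.mp hmul).resolve_left hcoeff

theorem half_derivation_coeff_w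
    (w : ℤ → ℂ) (γ : ℤ)
    (h : ∀ m n : ℤ, 2 * ((m - n : ℤ) : ℂ) * w (m + n)
        = ((-n - γ : ℤ) : ℂ) * w n) :
    ∀ m : ℤ, w m = 0 :=
  eq_zero_of_two_mul_sub_mul_eq w _ h
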